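/- The radius of robust feasibility satisfies ρ(Ā, b̄) = sup over r ∈ C(Ā, b̄) of min_{1 ≤ i ≤ m} r_i. -/

import Mathlib

open Finset Pointwise

noncomputable def eucNorm {k : ℕ} (v : Fin k → ℝ) : ℝ := Real.sqrt (∑ i, v i ^ 2)

def coneHull {k : ℕ} (X : Set (Fin k → ℝ)) : Set (Fin k → ℝ) :=
  {y | y = 0 ∨ ∃ t : ℝ, 0 ≤ t ∧ ∃ c ∈ convexHull ℝ X, y = t • c}

def dualCone {m : ℕ} (K : Set (Fin m → ℝ)) : Set (Fin m → ℝ) :=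
  {a | ∀ x ∈ K, 0 ≤ ∑ i, a i * x i}

def Feas {m n : ℕ} (K : Set (Fin m → ℝ)) (Abar : Fin m → Fin n → ℝ) (bbar : Fin m → ℝ)
    (r : Fin m → ℝ) : Set (Fin n → ℝ) :=
  {x | ∀ (a : Fin m → Fin n → ℝ) (b : Fin m → ℝ),
      (∀ i, eucNorm (Fin.snoc (a i - Abar i) (b i - bbar i)) ≤ r i) →
      (fun i => (∑ j, a i j * x j) + b i) ∈ -K}

def Adm {m n : ℕ} (K : Set (Fin m → ℝ)) (Abar : Fin m → Fin n → ℝ) (bbar : Fin m → ℝ) :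
    Set (Fin m → ℝ) :=
  {r | (∀ i, 0 ≤ r i) ∧ (Feas K Abar bbar r).Nonempty}

noncomputable def rrf {m n : ℕ} (K : Set (Fin m → ℝ)) (Abar : Fin m → Fin n → ℝ)
    (bbar : Fin m → ℝ) : ℝ :=
  sSup {α : ℝ | 0 ≤ α ∧ (fun _ => α) ∈ Adm K Abar bbar}

def Epi {m n : ℕ} (Abar : Fin m → Fin n → ℝ) (bbar : Fin m → ℝ) (B : Set (Fin m → ℝ)) :
    Set (Fin (n + 1) → ℝ) :=
  {y | ∃ l ∈ B, ∃ w : ℝ, 0 ≤ w ∧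
    y = Fin.snoc (fun j => ∑ i, l i * Abar i j) (-(∑ i, l i * bbar i) + w)}

noncomputable def edist0 {m n : ℕ} (Abar : Fin m → Fin n → ℝ) (bbar : Fin m → ℝ)
    (B : Set (Fin m → ℝ)) : ℝ :=
  sInf {t : ℝ | ∃ y ∈ Epi Abar bbar B, t = eucNorm y}

def IsCompactBase {m : ℕ} (C B : Set (Fin m → ℝ)) : Prop :=
  IsCompact B ∧ Convex ℝ B ∧ B ⊆ C ∧ (0 : Fin m → ℝ) ∉ B ∧
    C = {y | ∃ t : ℝ, 0 ≤ t ∧ ∃ b ∈ B, y = t • b}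

def IsClosedConvexCone {m : ℕ} (K : Set (Fin m → ℝ)) : Prop :=
  IsClosed K ∧ Convex ℝ K ∧ ∀ t : ℝ, 0 ≤ t → ∀ x ∈ K, t • x ∈ K

noncomputable def c1 {m : ℕ} (n : ℕ) (B : Set (Fin m → ℝ)) : ℝ :=
  (sSup {t : ℝ | ∃ l ∈ B, ∃ u : Fin m → (Fin (n + 1) → ℝ),
    (∀ i, eucNorm (u i) ≤ 1) ∧ t = eucNorm (∑ i, l i • u i)})⁻¹

noncomputable def c2 {m : ℕ} (B : Set (Fin m → ℝ)) : ℝ :=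
  (sInf {t : ℝ | ∃ l ∈ B, t = ∑ i, |l i|})⁻¹

theorem feas_antitone {m n : ℕ} (K : Set (Fin m → ℝ)) (Abar : Fin m → Fin n → ℝ)
    (bbar : Fin m → ℝ) : Antitone (Feas K Abar bbar) :=
  fun _ _ hrs _ hx a b hab => hx a b fun i => (hab i).trans (hrs i)

theorem mem_adm_of_nonneg_of_le {m n : ℕ} {K : Set (Fin m → ℝ)} {Abar : Fin m → Fin n → ℝ}
    {bbar : Fin m → ℝ} {r s : Fin m → ℝ} (hr : r ∈ Adm K Abar bbar) (hs : 0 ≤ s) (hsr : s ≤ r) :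
    s ∈ Adm K Abar bbar :=
  ⟨hs, hr.2.mono (feas_antitone K Abar bbar hsr)⟩

theorem const_iInf_mem_adm {m n : ℕ} [Nonempty (Fin m)] {K : Set (Fin m → ℝ)}
    {Abar : Fin m → Fin n → ℝ} {bbar : Fin m → ℝ} {r : Fin m → ℝ} (hr : r ∈ Adm K Abar bbar) :
    (fun _ => ⨅ i, r i) ∈ Adm K Abar bbar :=
  mem_adm_of_nonneg_of_le hr (fun _ => le_ciInf hr.1)
    (fun i => ciInf_le (Set.finite_range r).bddBelow i)

theorem statement5_general {m n : ℕ} (K : Set (Fin m → ℝ)) (Abar : Fin m → Fin n → ℝ)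
    (bbar : Fin m → ℝ) (hm : 0 < m) :
    rrf K Abar bbar = sSup {t : ℝ | ∃ r ∈ Adm K Abar bbar, t = ⨅ i, r i} := by
  have : Nonempty (Fin m) := ⟨⟨0, hm⟩⟩
  unfold rrf
  congr 1
  ext t
  constructor
  · rintro ⟨-, ht⟩
    exact ⟨fun _ => t, ht, ciInf_const.symm⟩
  · rintro ⟨r, hr, rfl⟩
    exact ⟨le_ciInf hr.1, const_iInf_mem_adm hr⟩

/-- the radius of robust feasibility equals the sup over admissible r
of the min of the components of r. -/
theorem statement5 {m n : ℕ} (K : Set (Fin m → ℝ)) (Abar : Fin m → Fin n → ℝ)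
    (bbar : Fin m → ℝ) (hm : 0 < m)
    (h0 : (fun _ => (0 : ℝ)) ∈ Adm K Abar bbar) :
    rrf K Abar bbar = sSup {t : ℝ | ∃ r ∈ Adm K Abar bbar, t = ⨅ i, r i} :=
  statement5_general K Abar bbar hm
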